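/- An interval [S,T] of Tam_n is new if and only if there is no pair of subtrees (A,B) of S and T respectively whose leaves are labelled by the same interval [i,j] ≠ [1,n+1]. -/
import Mathlib


/-- Planar binary trees. -/
inductive BT : Type
  | leaf : BT
  | node : BT → BT → BT
deriving DecidableEq

namespace BT

/-- Number of internal vertices. -/
def size : BT → ℕ
  | leaf => 0
  | node l r => l.size + r.size + 1

/-- One left rotation somewhere in the tree (covering relation of the Tamari lattice). -/
inductive Rot : BT → BT → Prop
  | root (a b c : BT) : Rot (node (node a b) c) (node a (node b c))
  | left {l l' : BT} (r : BT) : Rot l l' → Rot (node l r) (node l' r)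
  | right (l : BT) {r r' : BT} : Rot r r' → Rot (node l r) (node l r')

/-- The Tamari order: reflexive transitive closure of left rotations. -/
def tamariLE (S T : BT) : Prop := Relation.ReflTransGen Rot S T

/-- The partial order induced by a binary tree on `{1,…,size}` via in-order labelling:
`rel T i j` iff the vertex labelled `i` lies in the subtree rooted at the vertex labelled `j`. -/
def rel : BT → ℕ → ℕ → Prop
  | leaf, _, _ => False
  | node l r, i, j =>
      (j = l.size + 1 ∧ 1 ≤ i ∧ i ≤ l.size + r.size + 1) ∨
      rel l i j ∨
      (∃ i' j', rel r i' j' ∧ i = i' + l.size + 1 ∧ j = j' + l.size + 1)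

/-- Decreasing relations of a tree: pairs `(c, a)` with `a < c` and `c ◁ a`. -/
def Dec (T : BT) : Set (ℕ × ℕ) := {p | p.2 < p.1 ∧ T.rel p.1 p.2}

/-- Increasing relations of a tree: pairs `(a, c)` with `a < c` and `a ◁ c`. -/
def Inc (T : BT) : Set (ℕ × ℕ) := {p | p.1 < p.2 ∧ T.rel p.1 p.2}

/-- Left/right mirror image of a planar binary tree. -/
def mirror : BT → BT
  | leaf => leaf
  | node l r => node r.mirror l.mirror

/-- In-order label of the root (0 for the empty tree). -/
def rootLabel : BT → ℕ
  | leaf => 0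
  | node l _ => l.size + 1

/-- `rcRel T i j` iff, under in-order labelling, the vertex `j` is the right child of vertex `i`. -/
def rcRel : BT → ℕ → ℕ → Prop
  | leaf, _, _ => False
  | node l r, i, j =>
      (i = l.size + 1 ∧ r ≠ leaf ∧ j = l.size + 1 + r.rootLabel) ∨
      rcRel l i j ∨
      (∃ i' j', rcRel r i' j' ∧ i = i' + l.size + 1 ∧ j = j' + l.size + 1)

/-- `graft T i S` grafts the root of `S` on the `i`-th leaf of `T` (leaves numbered 1,…,size+1
from left to right). -/
def graft : BT → ℕ → BT → BT
  | leaf, _, S => S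
  | node l r, i, S =>
      if i ≤ l.size + 1 then node (l.graft i S) r
      else node l (r.graft (i - (l.size + 1)) S)

end BT

/-- An interval-poset of size `n`: a partial order on `{1,…,n}` (encoded as a relation on `ℕ`
supported and reflexive on `{1,…,n}`) satisfying the two interval-poset conditions. -/
def IsIntervalPoset (n : ℕ) (r : ℕ → ℕ → Prop) : Prop :=
  (∀ a b, r a b → 1 ≤ a ∧ a ≤ n ∧ 1 ≤ b ∧ b ≤ n) ∧
  (∀ a, 1 ≤ a → a ≤ n → r a a) ∧
  (∀ a b c, r a b → r b c → r a c) ∧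
  (∀ a b, r a b → r b a → a = b) ∧
  (∀ a b c, a < b → b < c → r a c → r b c) ∧
  (∀ a b c, a < b → b < c → r c a → r c b)

/-- The Châtel–Pons interval-poset of an interval `[S,T]`: reflexivity together with the
decreasing relations of `S` and the increasing relations of `T`. -/
def ipOf (S T : BT) : ℕ → ℕ → Prop := fun a b =>
  (a = b ∧ 1 ≤ a ∧ a ≤ S.size) ∨ (b < a ∧ S.rel a b) ∨ (a < b ∧ T.rel a b)

/-- `HasseCov r a b`: the relation `a ◁ b` is a cover relation (an edge `a → b` of the
Hasse diagram) of the poset `r`. -/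
def HasseCov (r : ℕ → ℕ → Prop) (a b : ℕ) : Prop :=
  r a b ∧ a ≠ b ∧ ∀ c, r a c → r c b → c = a ∨ c = b

/-- An exceptional interval-poset: the Hasse diagram contains no configuration
`y → x`, `y → z` with `x < y < z`. -/
def IsExceptional (n : ℕ) (r : ℕ → ℕ → Prop) : Prop :=
  IsIntervalPoset n r ∧
  ¬∃ x y z, x < y ∧ y < z ∧ HasseCov r y x ∧ HasseCov r y z

/-- A noncrossing tree in the based regular `(n+1)`-gon, with vertices `0,…,n`:
a spanning tree whose edges pairwise do not cross. Boundary edge `i` (for `1 ≤ i ≤ n`)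
joins vertices `i-1` and `i`; the base joins vertices `0` and `n`. -/
def IsNCTree (n : ℕ) (G : SimpleGraph (Fin (n + 1))) : Prop :=
  G.IsTree ∧
  ∀ a b c d : Fin (n + 1), G.Adj a b → G.Adj c d →
    ¬((a : ℕ) < c ∧ (c : ℕ) < b ∧ (b : ℕ) < d)

/-- Adjacency in a graph on `Fin (n+1)`, read on natural numbers. -/
def adjN (n : ℕ) (G : SimpleGraph (Fin (n + 1))) (a b : ℕ) : Prop :=
  ∃ (ha : a < n + 1) (hb : b < n + 1), G.Adj ⟨a, ha⟩ ⟨b, hb⟩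

/-- `EdgeLabel n G a b i`: the edge of the noncrossing tree `G` joining vertices `a < b`
carries the label `i`, i.e. it separates boundary edge `i` from the base and `i` is either
the edge itself (boundary case) or an open boundary edge. -/
def EdgeLabel (n : ℕ) (G : SimpleGraph (Fin (n + 1))) (a b i : ℕ) : Prop :=
  a < b ∧ b ≤ n ∧ adjN n G a b ∧ a < i ∧ i ≤ b ∧ (b = a + 1 ∨ ¬adjN n G (i - 1) i)

/-- The relation `◁_T` induced by a noncrossing tree: `i ◁ j` iff the edge labelled `i`
is separated from the base by the edge labelled `j` (plus reflexivity on `{1,…,n}`). -/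
def ncRel (n : ℕ) (G : SimpleGraph (Fin (n + 1))) : ℕ → ℕ → Prop := fun i j =>
  (i = j ∧ 1 ≤ i ∧ i ≤ n) ∨
  ∃ a b c d, EdgeLabel n G a b i ∧ EdgeLabel n G c d j ∧ c ≤ a ∧ b ≤ d ∧ ¬(a = c ∧ b = d)

/-- The graph `T_P` associated to an interval-poset `P`: for each `v`, an edge from the left
side of `min {x | x ◁ v}` (vertex `min − 1`) to the right side of `max {x | x ◁ v}`. -/
noncomputable def graphOf (n : ℕ) (r : ℕ → ℕ → Prop) : SimpleGraph (Fin (n + 1)) :=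
  SimpleGraph.fromRel (fun a b =>
    ∃ v, 1 ≤ v ∧ v ≤ n ∧ (a : ℕ) + 1 = sInf {x | r x v} ∧ (b : ℕ) = sSup {x | r x v})

/-- The partition `π_T` of a binary tree, as an equivalence-type relation: the finest
partition in which every vertex and its right child lie in the same block. -/
def sameBlock (T : BT) : ℕ → ℕ → Prop :=
  Relation.EqvGen (fun a b => T.rcRel a b ∨ T.rcRel b a)

/-- A relation (thought of as "same block of a partition") is noncrossing. -/
def IsNoncrossingRel (r : ℕ → ℕ → Prop) : Prop :=
  ¬∃ i j k l, i < j ∧ j < k ∧ k < l ∧ r i k ∧ r j l ∧ ¬r i j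

/-- The partition `π_T` of `{1,…,n}` associated to a binary tree, restricted to its support. -/
def partOf (T : BT) : ℕ → ℕ → Prop := fun a b =>
  sameBlock T a b ∧ 1 ≤ a ∧ a ≤ T.size ∧ 1 ≤ b ∧ b ≤ T.size

/-- A noncrossing partition of `{1,…,n}`, encoded as its "same block" equivalence relation. -/
def NCPartition (n : ℕ) (r : ℕ → ℕ → Prop) : Prop :=
  (∀ a b, r a b → 1 ≤ a ∧ a ≤ n ∧ 1 ≤ b ∧ b ≤ n) ∧
  (∀ a, 1 ≤ a → a ≤ n → r a a) ∧
  (∀ a b, r a b → r b a) ∧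
  (∀ a b c, r a b → r b c → r a c) ∧
  IsNoncrossingRel r

/-- `SubtreeAt S i j A`: `A` is a (nonempty) subtree of `S` rooted at an internal vertex,
whose leaves are the leaves `i,…,j` of `S`. -/
def SubtreeAt : BT → ℕ → ℕ → BT → Prop
  | .leaf, _, _, _ => False
  | .node l r, i, j, A =>
      (A = .node l r ∧ i = 1 ∧ j = (BT.node l r).size + 1) ∨
      SubtreeAt l i j A ∨
      (∃ i' j', SubtreeAt r i' j' A ∧ i = i' + l.size + 1 ∧ j = j' + l.size + 1)

/-- A new interval of `Tam n`: an interval that cannot be obtained as the grafting of two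
intervals of smaller sizes. -/
def IsNewInterval (n : ℕ) (S T : BT) : Prop :=
  S.size = n ∧ T.size = n ∧ BT.tamariLE S T ∧
  ¬∃ (S1 T1 S2 T2 : BT) (i : ℕ),
      S1.size = T1.size ∧ S2.size = T2.size ∧ S1.size < n ∧ S2.size < n ∧
      BT.tamariLE S1 T1 ∧ BT.tamariLE S2 T2 ∧ 1 ≤ i ∧ i ≤ S1.size + 1 ∧
      S = S1.graft i S2 ∧ T = T1.graft i T2

/-- The rise of a relation of size `n`: keep the decreasing relations, shift the increasing
relations by `+1`, on the ground set `{1,…,n+1}`. -/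
def riseRel (n : ℕ) (r : ℕ → ℕ → Prop) : ℕ → ℕ → Prop := fun a b =>
  (a = b ∧ 1 ≤ a ∧ a ≤ n + 1) ∨ (b < a ∧ r a b) ∨ (a < b ∧ 2 ≤ a ∧ r (a - 1) (b - 1))

/-- A relation is modern: no configuration `x ◁ y` and `z ◁ y` with `x < y < z`. -/
def ModernRel (r : ℕ → ℕ → Prop) : Prop :=
  ¬∃ x y z, x < y ∧ y < z ∧ r x y ∧ r z y

/-- A new interval-poset of size `m`: no increasing relation starting at `1`, no decreasing
relation starting at `m`, and no pair of relations `i+1 ◁ j+1` and `j ◁ i` with `i < j`. -/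
def NewIP (m : ℕ) (r : ℕ → ℕ → Prop) : Prop :=
  IsIntervalPoset m r ∧
  (¬∃ y, 1 < y ∧ r 1 y) ∧
  (¬∃ x, x < m ∧ r m x) ∧
  ¬∃ i j, i < j ∧ r (i + 1) (j + 1) ∧ r j i

/-- The fall of a relation of size `m`: keep the decreasing relations, shift the increasing
relations by `−1`, on the ground set `{1,…,m−1}`. -/
def fallRel (m : ℕ) (r : ℕ → ℕ → Prop) : ℕ → ℕ → Prop := fun a b =>
  (a = b ∧ 1 ≤ a ∧ a ≤ m - 1) ∨ (b < a ∧ r a b) ∨ (a < b ∧ r (a + 1) (b + 1))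

/-- Iterated rise: `riseIter n r k` is the `k`-th rise of a relation of size `n`. -/
def riseIter (n : ℕ) (r : ℕ → ℕ → Prop) : ℕ → (ℕ → ℕ → Prop)
  | 0 => r
  | k + 1 => riseRel (n + k) (riseIter n r k)

/-- An infinitely modern relation: no configuration `w ◁ x` and `z ◁ y` with `w < x < y < z`. -/
def InfModernRel (r : ℕ → ℕ → Prop) : Prop :=
  ¬∃ w x y z, w < x ∧ x < y ∧ y < z ∧ r w x ∧ r z y

open Classical in
/-- `irStat n r`: the smallest `k` with an increasing relation `k ◁ k+1`, and `n` if none. -/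
noncomputable def irStat (n : ℕ) (r : ℕ → ℕ → Prop) : ℕ :=
  if ∃ k, r k (k + 1) then sInf {k | r k (k + 1)} else n

open Classical in
/-- `drStat n r`: the largest `i` with a decreasing relation `i ◁ i−1`, and `1` if none. -/
noncomputable def drStat (n : ℕ) (r : ℕ → ℕ → Prop) : ℕ :=
  if ∃ i, 2 ≤ i ∧ r i (i - 1) then sSup {i | 2 ≤ i ∧ r i (i - 1)} else 1
namespace BT

theorem rot_size {S S' : BT} (h : Rot S S') : S.size = S'.size := by
  induction h with
  | root a b c => simp only [size]; omega
  | left r _ ih => simp [size, ih]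
  | right l _ ih => simp [size, ih]

/-- Combine two optional trees. -/
def comb : Option BT → Option BT → Option BT
  | none, y => y
  | some a, none => some a
  | some a, some b => some (node a b)

@[simp] theorem comb_none_left (y : Option BT) : comb none y = y := rfl
@[simp] theorem comb_none_right (x : Option BT) : comb x none = x := by
  cases x <;> rfl
@[simp] theorem comb_some_some (a b : BT) : comb (some a) (some b) = some (node a b) := rfl

/-- Restriction of a tree (whose leaves are `o+1, …, o+size+1`) to the selected leaves. -/
def restr (f : ℕ → Bool) : BT → ℕ → Option BT
  | leaf, o => if f (o+1) then some leaf else none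
  | node l r, o => comb (restr f l o) (restr f r (o + l.size + 1))

def OptRot (x y : Option BT) : Prop := x = y ∨ ∃ a b, x = some a ∧ y = some b ∧ Rot a b

theorem optrot_assoc (x y z : Option BT) : OptRot (comb (comb x y) z) (comb x (comb y z)) := by
  rcases x with _ | a <;> rcases y with _ | b <;> rcases z with _ | c <;>
    simp [comb, OptRot]
  exact Or.inr (Rot.root a b c)

theorem optrot_comb_left {x x' : Option BT} (z : Option BT) (h : OptRot x x') :
    OptRot (comb x z) (comb x' z) := by
  rcases h with rfl | ⟨a, b, rfl, rfl, hab⟩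
  · left; rfl
  · rcases z with _ | z
    · exact Or.inr ⟨a, b, rfl, rfl, hab⟩
    · exact Or.inr ⟨node a z, node b z, rfl, rfl, Rot.left _ hab⟩

theorem optrot_comb_right {z z' : Option BT} (x : Option BT) (h : OptRot z z') :
    OptRot (comb x z) (comb x z') := by
  rcases h with rfl | ⟨a, b, rfl, rfl, hab⟩
  · left; rfl
  · rcases x with _ | x
    · exact Or.inr ⟨a, b, rfl, rfl, hab⟩
    · exact Or.inr ⟨node x a, node x b, rfl, rfl, Rot.right _ hab⟩

theorem restr_rot {S S' : BT} (h : Rot S S') (f : ℕ → Bool) (o : ℕ) :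
    OptRot (restr f S o) (restr f S' o) := by
  induction h generalizing o with
  | root a b c =>
    have e : o + (node a b).size + 1 = o + a.size + 1 + b.size + 1 := by simp only [size]; omega
    simp only [restr]
    rw [e]
    exact optrot_assoc _ _ _
  | left r hl ih =>
    simp only [restr]
    rw [rot_size hl]
    exact optrot_comb_left _ (ih o)
  | right l hr ih =>
    simp only [restr]
    exact optrot_comb_right _ (ih _)

theorem restr_le {S T : BT} (h : tamariLE S T) (f : ℕ → Bool) (o : ℕ) (a : BT)
    (ha : restr f S o = some a) : ∃ b, restr f T o = some b ∧ tamariLE a b := by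
  induction h with
  | refl => exact ⟨a, ha, Relation.ReflTransGen.refl⟩
  | tail _ hrot ih =>
    obtain ⟨b, hb, hab⟩ := ih
    rcases restr_rot hrot f _ with heq | ⟨c, d, hc, hd, hcd⟩
    · exact ⟨b, heq ▸ hb, hab⟩
    · rw [hb] at hc
      obtain rfl : b = c := Option.some.inj hc
      exact ⟨d, hd, hab.tail hcd⟩

theorem restr_all_true {f : ℕ → Bool} (A : BT) (o : ℕ)
    (hf : ∀ ℓ, o + 1 ≤ ℓ → ℓ ≤ o + A.size + 1 → f ℓ = true) :
    restr f A o = some A := by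
  induction A generalizing o with
  | leaf => simp [restr, hf (o+1) le_rfl (by simp only [size]; omega)]
  | node l r ihl ihr =>
    have h1 := ihl o (fun ℓ u v => hf ℓ u (by simp only [size] at *; omega))
    have h2 := ihr (o + l.size + 1) (fun ℓ u v => hf ℓ (by omega) (by simp only [size] at *; omega))
    simp [restr, h1, h2]

theorem restr_all_false {f : ℕ → Bool} (A : BT) (o : ℕ)
    (hf : ∀ ℓ, o + 1 ≤ ℓ → ℓ ≤ o + A.size + 1 → f ℓ = false) :
    restr f A o = none := by
  induction A generalizing o with
  | leaf => simp [restr, hf (o+1) le_rfl (by simp only [size]; omega)]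
  | node l r ihl ihr =>
    have h1 := ihl o (fun ℓ u v => hf ℓ u (by simp only [size] at *; omega))
    have h2 := ihr (o + l.size + 1) (fun ℓ u v => hf ℓ (by omega) (by simp only [size] at *; omega))
    simp [restr, h1, h2]

theorem restr_first_leaf {f : ℕ → Bool} (A : BT) (o : ℕ)
    (h1 : f (o + 1) = true)
    (h2 : ∀ ℓ, o + 2 ≤ ℓ → ℓ ≤ o + A.size + 1 → f ℓ = false) :
    restr f A o = some leaf := by
  induction A generalizing o with
  | leaf => simp [restr, h1]
  | node l r ihl ihr =>
    have hl := ihl o h1 (fun ℓ u v => h2 ℓ u (by simp only [size] at *; omega))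
    have hr := restr_all_false r (o + l.size + 1)
      (fun ℓ u v => h2 ℓ (by omega) (by simp only [size] at *; omega))
    simp [restr, hl, hr]

theorem graft_size (T : BT) (i : ℕ) (S : BT) : (T.graft i S).size = T.size + S.size := by
  induction T generalizing i with
  | leaf => simp [graft, size]
  | node l r ihl ihr =>
    by_cases hi : i ≤ l.size + 1 <;> simp [graft, hi, size, ihl, ihr] <;> omega

theorem subtreeAt_bounds : ∀ (S A : BT) (i j : ℕ), SubtreeAt S i j A →
    j = i + A.size ∧ 1 ≤ i ∧ j ≤ S.size + 1 ∧ 1 ≤ A.size := by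
  intro S
  induction S with
  | leaf => intro A i j hh; exact absurd hh id
  | node l r ihl ihr =>
    intro A i j hh
    rcases hh with ⟨rfl, rfl, rfl⟩ | hh | ⟨i', j', hh, rfl, rfl⟩
    · simp only [size]; omega
    · have := ihl A i j hh
      simp only [size] at *; omega
    · have := ihr A i' j' hh
      simp only [size] at *; omega

theorem subtreeAt_decomp : ∀ (S A : BT) (i j : ℕ), SubtreeAt S i j A →
    ∃ S1 : BT, S = S1.graft i A ∧ S1.size + A.size = S.size := by
  intro S
  induction S with
  | leaf => intro A i j hh; exact absurd hh id
  | node l r ihl ihr =>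
    intro A i j hh
    rcases hh with ⟨rfl, rfl, rfl⟩ | hh | ⟨i', j', hh, rfl, rfl⟩
    · exact ⟨leaf, rfl, by simp only [size]; omega⟩
    · obtain ⟨l1, rfl, hsz⟩ := ihl A i j hh
      obtain ⟨hj, hi1, hjb, hA1⟩ := subtreeAt_bounds _ A i j hh
      have hgs := graft_size l1 i A
      have hi : i ≤ l1.size + 1 := by omega
      exact ⟨node l1 r, by simp [graft, hi], by simp only [size]; omega⟩
    · obtain ⟨r1, rfl, hsz⟩ := ihr A i' j' hh
      obtain ⟨hj, hi1, hjb, hA1⟩ := subtreeAt_bounds _ A i' j' hh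
      have hi : ¬ (i' + l.size + 1 ≤ l.size + 1) := by omega
      refine ⟨node l r1, ?_, by simp only [size]; omega⟩
      simp [graft, hi]

theorem subtreeAt_graft : ∀ (S1 A : BT) (i : ℕ), A ≠ leaf → 1 ≤ i → i ≤ S1.size + 1 →
    SubtreeAt (S1.graft i A) i (i + A.size) A := by
  intro S1
  induction S1 with
  | leaf =>
    intro A i hA h1 h2
    have : i = 1 := by simp only [size] at h2; omega
    subst this
    cases A with
    | leaf => exact absurd rfl hA
    | node a b => exact Or.inl ⟨rfl, rfl, by simp only [size]; omega⟩
  | node l r ihl ihr =>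
    intro A i hA h1 h2
    by_cases hi : i ≤ l.size + 1
    · simp only [graft, if_pos hi]
      exact Or.inr (Or.inl (ihl A i hA h1 hi))
    · simp only [graft, if_neg hi]
      refine Or.inr (Or.inr ⟨i - (l.size + 1), i - (l.size + 1) + A.size, ?_, by omega, by omega⟩)
      refine ihr A _ hA (by omega) ?_
      simp only [size] at h2; omega

theorem restr_subtree {f : ℕ → Bool} : ∀ (S A : BT) (i j o : ℕ), SubtreeAt S i j A →
    (∀ ℓ, 1 ≤ ℓ → ℓ ≤ S.size + 1 → (f (o + ℓ) = true ↔ (i ≤ ℓ ∧ ℓ ≤ j))) →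
    restr f S o = some A := by
  intro S
  induction S with
  | leaf => intro A i j o hh; exact absurd hh id
  | node l r ihl ihr =>
    intro A i j o hh hf
    rcases hh with ⟨rfl, rfl, rfl⟩ | hh | ⟨i', j', hh, rfl, rfl⟩
    · exact restr_all_true _ o (fun ℓ u v => by
        have := (hf (ℓ - o) (by omega) (by omega)).2
        rw [show o + (ℓ - o) = ℓ by omega] at this
        exact this ⟨by omega, by omega⟩)
    · obtain ⟨hj, hi1, hjb, hA1⟩ := subtreeAt_bounds l A i j hh
      have h1 : restr f l o = some A := by
        refine ihl A i j o hh (fun ℓ u v => ?_)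
        exact hf ℓ u (by simp only [size]; omega)
      have h2 : restr f r (o + l.size + 1) = none := by
        refine restr_all_false r _ (fun ℓ u v => ?_)
        have h3 := hf (ℓ - o) (by omega) (by simp only [size]; omega)
        rw [show o + (ℓ - o) = ℓ by omega] at h3
        rcases hb : f ℓ
        · rfl
        · exact absurd (h3.1 hb).2 (by omega)
      simp [restr, h1, h2]
    · obtain ⟨hj, hi1, hjb, hA1⟩ := subtreeAt_bounds r A i' j' hh
      have h1 : restr f l o = none := by
        refine restr_all_false l _ (fun ℓ u v => ?_)
        have h3 := hf (ℓ - o) (by omega) (by simp only [size]; omega)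
        rw [show o + (ℓ - o) = ℓ by omega] at h3
        rcases hb : f ℓ
        · rfl
        · exact absurd (h3.1 hb).1 (by omega)
      have h2 : restr f r (o + l.size + 1) = some A := by
        refine ihr A i' j' (o + l.size + 1) hh (fun ℓ u v => ?_)
        have h3 := hf (ℓ + l.size + 1) (by omega) (by simp only [size]; omega)
        rw [show o + (ℓ + l.size + 1) = o + l.size + 1 + ℓ by omega] at h3
        constructor
        · intro hb; have := h3.1 hb; omega
        · intro hb; exact h3.2 ⟨by omega, by omega⟩
      simp [restr, h1, h2]

theorem restr_graft {f : ℕ → Bool} : ∀ (S1 A : BT) (i o : ℕ), 1 ≤ i → i ≤ S1.size + 1 →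
    (∀ ℓ, 1 ≤ ℓ → ℓ ≤ S1.size + A.size + 1 → (f (o + ℓ) = true ↔ (ℓ ≤ i ∨ i + A.size + 1 ≤ ℓ))) →
    restr f (S1.graft i A) o = some S1 := by
  intro S1
  induction S1 with
  | leaf =>
    intro A i o h1 h2 hf
    have hi : i = 1 := by simp only [size] at h2; omega
    subst hi
    show restr f A o = some leaf
    refine restr_first_leaf A o ?_ ?_
    · exact (hf 1 le_rfl (by simp only [size]; omega)).2 (Or.inl le_rfl)
    · intro ℓ u v
      have h3 := hf (ℓ - o) (by omega) (by simp only [size]; omega)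
      rw [show o + (ℓ - o) = ℓ by omega] at h3
      rcases hb : f ℓ
      · rfl
      · have := h3.1 hb; omega
  | node l r ihl ihr =>
    intro A i o h1 h2 hf
    by_cases hi : i ≤ l.size + 1
    · simp only [graft, if_pos hi]
      have e1 : restr f (l.graft i A) o = some l := by
        refine ihl A i o h1 hi (fun ℓ u v => hf ℓ u (by simp only [size]; omega))
      have e2 : restr f r (o + (l.graft i A).size + 1) = some r := by
        rw [graft_size]
        refine restr_all_true r _ (fun ℓ u v => ?_)
        have h3 := hf (ℓ - o) (by omega) (by simp only [size]; omega)
        rw [show o + (ℓ - o) = ℓ by omega] at h3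
        exact h3.2 (Or.inr (by omega))
      simp [restr, e1, e2]
    · simp only [graft, if_neg hi]
      have e1 : restr f l o = some l := by
        refine restr_all_true l _ (fun ℓ u v => ?_)
        have h3 := hf (ℓ - o) (by omega) (by simp only [size]; omega)
        rw [show o + (ℓ - o) = ℓ by omega] at h3
        exact h3.2 (Or.inl (by omega))
      have e2 : restr f (r.graft (i - (l.size + 1)) A) (o + l.size + 1) = some r := by
        refine ihr A (i - (l.size + 1)) (o + l.size + 1) (by omega)
          (by simp only [size] at h2; omega) (fun ℓ u v => ?_)
        have h3 := hf (ℓ + l.size + 1) (by omega) (by simp only [size]; omega)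
        rw [show o + (ℓ + l.size + 1) = o + l.size + 1 + ℓ by omega] at h3
        constructor
        · intro hb; have := h3.1 hb; omega
        · intro hb; exact h3.2 (by omega)
      simp [restr, e1, e2]

end BT
/-- an interval `[S,T]` of `Tam n` is new iff there is no pair of subtrees
`(A,B)` of `S` and `T` whose leaves are labelled by the same interval `[i,j] ≠ [1,n+1]`. -/
theorem new_iff_no_common_subtree_interval (n : ℕ) (S T : BT)
    (hS : S.size = n) (hT : T.size = n) (h : BT.tamariLE S T) :
    IsNewInterval n S T ↔
      ¬∃ (A B : BT) (i j : ℕ),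
          SubtreeAt S i j A ∧ SubtreeAt T i j B ∧ ¬(i = 1 ∧ j = n + 1) := by
  constructor
  · rintro ⟨-, -, -, hnew⟩ ⟨A, B, i, j, hA, hB, hne⟩
    obtain ⟨hjA, hiA, hjbA, hA1⟩ := BT.subtreeAt_bounds S A i j hA
    obtain ⟨hjB, hiB, hjbB, hB1⟩ := BT.subtreeAt_bounds T B i j hB
    obtain ⟨S1, hSe, hS1⟩ := BT.subtreeAt_decomp S A i j hA
    obtain ⟨T1, hTe, hT1⟩ := BT.subtreeAt_decomp T B i j hB
    have hAB : A.size = B.size := by omega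
    have hAn : A.size < n := by
      rcases Nat.lt_or_ge A.size n with hc | hc
      · exact hc
      · exact absurd ⟨by omega, by omega⟩ hne
    have fin : BT.tamariLE A B := by
      have e1 : BT.restr (fun ℓ => decide (i ≤ ℓ ∧ ℓ ≤ j)) S 0 = some A := by
        refine BT.restr_subtree S A i j 0 hA (fun ℓ u v => ?_)
        simp
      have e2 : BT.restr (fun ℓ => decide (i ≤ ℓ ∧ ℓ ≤ j)) T 0 = some B := by
        refine BT.restr_subtree T B i j 0 hB (fun ℓ u v => ?_)
        simp
      obtain ⟨b, hb, hab⟩ := BT.restr_le h _ 0 A e1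
      rw [e2] at hb
      rwa [Option.some.inj hb]
    have fout : BT.tamariLE S1 T1 := by
      have e1 : BT.restr (fun ℓ => decide (ℓ ≤ i ∨ i + A.size + 1 ≤ ℓ)) S 0 = some S1 := by
        rw [hSe]
        refine BT.restr_graft S1 A i 0 hiA (by omega) (fun ℓ u v => ?_)
        simp
      have e2 : BT.restr (fun ℓ => decide (ℓ ≤ i ∨ i + A.size + 1 ≤ ℓ)) T 0 = some T1 := by
        rw [hTe]
        refine BT.restr_graft T1 B i 0 hiA (by omega) (fun ℓ u v => ?_)
        simp
        omega
      obtain ⟨b, hb, hab⟩ := BT.restr_le h _ 0 S1 e1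
      rw [e2] at hb
      rwa [Option.some.inj hb]
    exact hnew ⟨S1, T1, A, B, i, by omega, hAB, by omega, hAn, fout, fin, hiA, by omega,
      hSe, hTe⟩
  · intro hno
    refine ⟨hS, hT, h, ?_⟩
    rintro ⟨S1, T1, S2, T2, i, h1, h2, h3, h4, hle1, hle2, hi1, hi2, rfl, rfl⟩
    have g1 := BT.graft_size S1 i S2
    have g2 := BT.graft_size T1 i T2
    have hS2 : 1 ≤ S2.size := by omega
    have hS2ne : S2 ≠ BT.leaf := by
      intro e; rw [e] at hS2; simp only [BT.size] at hS2; omega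
    have hT2ne : T2 ≠ BT.leaf := by
      intro e; rw [e] at h2; simp only [BT.size] at h2; omega
    refine hno ⟨S2, T2, i, i + S2.size,
      BT.subtreeAt_graft S1 S2 i hS2ne hi1 hi2, ?_, fun ⟨e1, e2⟩ => by omega⟩
    have := BT.subtreeAt_graft T1 T2 i hT2ne hi1 (by omega)
    rwa [← h2] at this
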